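/- arXiv:1909.03450 — 5 statements merged into one kernel-verified Lean document; each statement's English description precedes it below -/
import Mathlib

section
/- Let A be a commutative ring and u_0, u_1, u_2 ∈ A^* with u_0 = u_1 + u_2. Then in K_2^M(A), the alternating sum {u_1, u_2} - {u_0, u_2} + {u_0, u_1} lies in the ideal generated by {-1}; more precisely {u_1, u_2} - {u_0, u_2} + {u_0, u_1} = -{-1, u_0}. -/
variable (A : Type) [CommRing A]

/-- Generating relations for the Milnor `K`-group of a commutative ring:
multilinearity relations together with the Steinberg relations
(some two slots summing to `0` or `1`). -/
def steinbergSet (n : ℕ) : Set (FreeAbelianGroup (Fin n → Aˣ)) :=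
  {x | ∃ (v : Fin n → Aˣ) (i : Fin n) (a b : Aˣ),
      v i = a * b ∧
      x = FreeAbelianGroup.of v - FreeAbelianGroup.of (Function.update v i a)
            - FreeAbelianGroup.of (Function.update v i b)} ∪
  {x | ∃ v : Fin n → Aˣ,
      (∃ i j : Fin n, i ≠ j ∧ (((v i : A) + (v j : A) = 0) ∨ ((v i : A) + (v j : A) = 1))) ∧
      x = FreeAbelianGroup.of v}

def milnorRel (n : ℕ) : AddSubgroup (FreeAbelianGroup (Fin n → Aˣ)) :=
  AddSubgroup.closure (steinbergSet A n)

/-- The `n`-th Milnor `K`-group `K_n^M(A)` of a commutative ring `A`. -/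
def MilnorK (n : ℕ) : Type :=
  FreeAbelianGroup (Fin n → Aˣ) ⧸ milnorRel A n

instance (n : ℕ) : AddCommGroup (MilnorK A n) :=
  inferInstanceAs (AddCommGroup (FreeAbelianGroup (Fin n → Aˣ) ⧸ milnorRel A n))

/-- The Milnor symbol `{v 0, …, v (n-1)} ∈ K_n^M(A)`. -/
def symbolK (n : ℕ) (v : Fin n → Aˣ) : MilnorK A n :=
  QuotientAddGroup.mk (FreeAbelianGroup.of v)

-- auxiliary lemmas
variable {A}

lemma update_zero (a b c : Aˣ) : Function.update ![a, b] 0 c = ![c, b] := by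
  funext i; fin_cases i <;> simp [Function.update]

lemma update_one (a b c : Aˣ) : Function.update ![a, b] 1 c = ![a, c] := by
  funext i; fin_cases i <;> simp [Function.update]

lemma mk_eq_zero {x : FreeAbelianGroup (Fin 2 → Aˣ)} (hx : x ∈ steinbergSet A 2) :
    (QuotientAddGroup.mk x : MilnorK A 2) = 0 :=
  (QuotientAddGroup.eq_zero_iff x).mpr (AddSubgroup.subset_closure hx)

lemma symbolK_mul_left (a b c : Aˣ) :
    symbolK A 2 ![a * b, c] = symbolK A 2 ![a, c] + symbolK A 2 ![b, c] := by
  have hx : (FreeAbelianGroup.of ![a * b, c] - FreeAbelianGroup.of ![a, c]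
      - FreeAbelianGroup.of ![b, c]) ∈ steinbergSet A 2 := by
    left
    exact ⟨![a * b, c], 0, a, b, by simp, by rw [update_zero, update_zero]⟩
  have h0 := mk_eq_zero hx
  have : symbolK A 2 ![a * b, c] - symbolK A 2 ![a, c] - symbolK A 2 ![b, c] = 0 := by
    rw [show symbolK A 2 ![a * b, c] - symbolK A 2 ![a, c] - symbolK A 2 ![b, c]
      = (QuotientAddGroup.mk (FreeAbelianGroup.of ![a * b, c] - FreeAbelianGroup.of ![a, c]
        - FreeAbelianGroup.of ![b, c]) : MilnorK A 2) from rfl]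
    exact h0
  linear_combination (norm := abel) this

lemma symbolK_mul_right (a b c : Aˣ) :
    symbolK A 2 ![a, b * c] = symbolK A 2 ![a, b] + symbolK A 2 ![a, c] := by
  have hx : (FreeAbelianGroup.of ![a, b * c] - FreeAbelianGroup.of ![a, b]
      - FreeAbelianGroup.of ![a, c]) ∈ steinbergSet A 2 := by
    left
    exact ⟨![a, b * c], 1, b, c, by simp, by rw [update_one, update_one]⟩
  have h0 := mk_eq_zero hx
  have : symbolK A 2 ![a, b * c] - symbolK A 2 ![a, b] - symbolK A 2 ![a, c] = 0 := by
    rw [show symbolK A 2 ![a, b * c] - symbolK A 2 ![a, b] - symbolK A 2 ![a, c]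
      = (QuotientAddGroup.mk (FreeAbelianGroup.of ![a, b * c] - FreeAbelianGroup.of ![a, b]
        - FreeAbelianGroup.of ![a, c]) : MilnorK A 2) from rfl]
    exact h0
  linear_combination (norm := abel) this

lemma symbolK_steinberg {a b : Aˣ} (hab : (a : A) + (b : A) = 0 ∨ (a : A) + (b : A) = 1) :
    symbolK A 2 ![a, b] = 0 := by
  apply mk_eq_zero
  right
  exact ⟨![a, b], ⟨0, 1, by decide, by simpa using hab⟩, rfl⟩

lemma symbolK_neg_self (a : Aˣ) : symbolK A 2 ![a, -a] = 0 :=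
  symbolK_steinberg (Or.inl (by simp))

lemma symbolK_one_left (c : Aˣ) : symbolK A 2 ![1, c] = 0 := by
  have h := symbolK_mul_left (A := A) 1 1 c
  rw [one_mul] at h
  linear_combination (norm := abel) -h

lemma symbolK_one_right (c : Aˣ) : symbolK A 2 ![c, 1] = 0 := by
  have h := symbolK_mul_right (A := A) c 1 1
  rw [one_mul] at h
  linear_combination (norm := abel) -h

lemma symbolK_inv_left (a c : Aˣ) : symbolK A 2 ![a⁻¹, c] = - symbolK A 2 ![a, c] := by
  have h := symbolK_mul_left (A := A) a a⁻¹ c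
  rw [mul_inv_cancel, symbolK_one_left] at h
  linear_combination (norm := abel) -h

lemma symbolK_inv_right (a c : Aˣ) : symbolK A 2 ![a, c⁻¹] = - symbolK A 2 ![a, c] := by
  have h := symbolK_mul_right (A := A) a c c⁻¹
  rw [mul_inv_cancel, symbolK_one_right] at h
  linear_combination (norm := abel) -h

lemma symbolK_antisymm (a b : Aˣ) :
    symbolK A 2 ![a, b] + symbolK A 2 ![b, a] = 0 := by
  have h1 : symbolK A 2 ![a * b, -(a * b)] = 0 := symbolK_neg_self _
  rw [symbolK_mul_left] at h1
  have e1 : symbolK A 2 ![a, -(a * b)] = symbolK A 2 ![a, -a] + symbolK A 2 ![a, b] := by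
    rw [show (-(a * b) : Aˣ) = -a * b from (neg_mul a b).symm, symbolK_mul_right]
  have e2 : symbolK A 2 ![b, -(a * b)] = symbolK A 2 ![b, a] + symbolK A 2 ![b, -b] := by
    rw [show (-(a * b) : Aˣ) = a * -b from (mul_neg a b).symm, symbolK_mul_right]
  have ha := symbolK_neg_self (A := A) a
  have hb := symbolK_neg_self (A := A) b
  rw [e1, e2, ha, hb] at h1
  linear_combination (norm := abel) h1

lemma symbolK_self (a : Aˣ) : symbolK A 2 ![a, a] = - symbolK A 2 ![-1, a] := by
  have e : (a : Aˣ) = (-1) * (-a) := by rw [neg_one_mul, neg_neg]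
  have h1 : symbolK A 2 ![a, a] = symbolK A 2 ![a, -1] + symbolK A 2 ![a, -a] := by
    conv_lhs => rw [show symbolK A 2 ![a, a] = symbolK A 2 ![a, (-1) * (-a)] by rw [← e]]
    rw [symbolK_mul_right]
  rw [symbolK_neg_self] at h1
  have h2 := symbolK_antisymm (A := A) a (-1)
  linear_combination (norm := abel) h1 + h2

lemma symbolK_neg_one_two_torsion (c : Aˣ) :
    symbolK A 2 ![-1, c] + symbolK A 2 ![-1, c] = 0 := by
  have h := symbolK_mul_left (A := A) (-1) (-1) c
  rw [neg_mul_neg, one_mul, symbolK_one_left] at h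
  linear_combination (norm := abel) -h

/-- The `n = 2` case of the Dedekind reciprocity law: if `u₀ = u₁ + u₂` are units, then
`{u₁, u₂} - {u₀, u₂} + {u₀, u₁} = -{-1, u₀}` in `K_2^M(A)`; in particular the alternating
sum lies in the ideal generated by `{-1}`. -/
theorem dedekind_reciprocity_two (u0 u1 u2 : Aˣ) (h : (u0 : A) = (u1 : A) + (u2 : A)) :
    symbolK A 2 ![u1, u2] - symbolK A 2 ![u0, u2] + symbolK A 2 ![u0, u1]
      = - symbolK A 2 ![-1, u0] := by
  set w1 : Aˣ := u1 * u0⁻¹ with hw1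
  set w2 : Aˣ := u2 * u0⁻¹ with hw2
  have hsum : ((w1 : A) + (w2 : A) = 0) ∨ ((w1 : A) + (w2 : A) = 1) := by
    right
    have : ((w1 : A) + (w2 : A)) = ((u1 : A) + (u2 : A)) * ((u0⁻¹ : Aˣ) : A) := by
      push_cast [hw1, hw2]; ring
    rw [this, ← h, ← Units.val_mul, mul_inv_cancel, Units.val_one]
  have hS : symbolK A 2 ![w1, w2] = 0 := symbolK_steinberg hsum
  rw [hw1, hw2, symbolK_mul_left, symbolK_mul_right, symbolK_mul_right,
    symbolK_inv_right, symbolK_inv_right, symbolK_inv_left, symbolK_inv_left] at hS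
  have h1 := symbolK_antisymm (A := A) u1 u0
  have h2 := symbolK_self (A := A) u0
  have h3 := symbolK_neg_one_two_torsion (A := A) u0
  linear_combination (norm := abel) hS + h1 - h2 + h3
end

section
/- The map η: S(ℚ) → C(ℚ)^× sending the characteristic function χ_{a+dℤ} (0 ≤ a < d, a,d ∈ ℚ, d > 0) to the function z ↦ 1 - e^{2πi(z-a)/d} is a well-defined group homomorphism from the additive group of locally constant ℤ-valued functions with bounded support on ℚ to the multiplicative group of nowhere-zero meromorphic functions; in particular it respects the refinement relation χ_{a+dℤ} = Σ_{b=0}^{m-1} χ_{a+db+dmℤ}. -/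
open Complex

/-- `e(z) = exp(2πiz)`. -/
noncomputable def e (z : ℂ) : ℂ := Complex.exp (2 * Real.pi * I * z)

open Classical in
/-- The characteristic function of the arithmetic progression `a + dℤ` in `ℚ`. -/
noncomputable def ind (a d : ℚ) : ℚ → ℤ :=
  fun x => if ∃ k : ℤ, x = a + d * k then 1 else 0

/-- `S(ℚ)`: the additive group of locally constant `ℤ`-valued functions with bounded
support on `ℚ`, i.e. the subgroup of `ℚ → ℤ` generated by the characteristic
functions `χ_{a+dℤ}` with `0 ≤ a < d`. -/
def SQ : AddSubgroup (ℚ → ℤ) :=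
  AddSubgroup.closure {f | ∃ a d : ℚ, 0 ≤ a ∧ a < d ∧ f = ind a d}

/-- The complement of `ℚ` in `ℂ`: the functions `z ↦ 1 - e((z-a)/d)` are nowhere zero
there, so they are units of the ring of functions on this set. -/
def Dom : Type := {z : ℂ // ∀ q : ℚ, (q : ℂ) ≠ z}

/-!
Every `f ∈ S(ℚ)` is `n`-periodic and supported on `(1/n)ℤ` for `n` divisible enough, so
`η f` can be computed as the finite product `∏ (1 - e((z - c)/n))^{f(c)}` over the points `c` of
`(1/n)ℤ` in the period `[0, n)`. This product is additive in `f`; for `f = χ_{a+dℤ}` and `n`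
divisible enough it only involves `c = a + db` with `b < m := n/d`, and then equals
`1 - e((z - a)/d)` by the refinement identity, which is `∏_{b<m} (1 - ζ^b y) = 1 - y^m` for a
primitive `m`-th root of unity `ζ`. So the value stabilises along multiples of some `n₀`, and
the stable value is a homomorphism on the subgroup where it exists, which contains `S(ℚ)`.
-/

open Finset

lemma e_add (x y : ℂ) : e (x + y) = e x * e y := by
  simp only [e, mul_add, Complex.exp_add]

lemma e_natCast_mul (n : ℕ) (x : ℂ) : e (n * x) = e x ^ n := by
  rw [e, e, ← Complex.exp_nat_mul]
  ring_nf

lemma e_eq_one_iff {x : ℂ} : e x = 1 ↔ ∃ n : ℤ, x = n := by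
  have h2πi : 2 * (Real.pi : ℂ) * I ≠ 0 := by simp [Real.pi_ne_zero, I_ne_zero]
  simp only [e, Complex.exp_eq_one_iff, mul_comm _ (2 * (Real.pi : ℂ) * I),
    mul_right_inj' h2πi]

lemma isPrimitiveRoot_e_neg_inv {m : ℕ} (hm : m ≠ 0) : IsPrimitiveRoot (e (-(1 / m))) m := by
  have h : e (-(1 / m)) = (Complex.exp (2 * Real.pi * I / m))⁻¹ := by
    rw [e, ← Complex.exp_neg]
    ring_nf
  exact h ▸ (Complex.isPrimitiveRoot_exp m hm).inv

lemma prod_range_one_sub_pow_mul {R : Type*} [CommRing R] [IsDomain R] {ζ : R} {m : ℕ}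
    (hζ : IsPrimitiveRoot ζ m) (hm : 0 < m) (y : R) :
    ∏ b ∈ range m, (1 - ζ ^ b * y) = 1 - y ^ m := by
  simpa [Polynomial.eval_prod] using
    (congrArg (Polynomial.eval 1) (X_pow_sub_C_eq_prod hζ hm (rfl : y ^ m = y ^ m))).symm

lemma prod_range_one_sub_e (w : ℂ) {m : ℕ} (hm : 0 < m) :
    ∏ b ∈ range m, (1 - e ((w - b) / m)) = 1 - e w := by
  have hm' : (m : ℂ) ≠ 0 := by exact_mod_cast hm.ne'
  have hfactor (b : ℕ) : e ((w - b) / m) = e (-(1 / m)) ^ b * e (w / m) := by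
    rw [← e_natCast_mul, ← e_add]
    congr 1
    field_simp
    ring
  simp_rw [hfactor, prod_range_one_sub_pow_mul (isPrimitiveRoot_e_neg_inv hm.ne') hm,
    ← e_natCast_mul, mul_div_cancel₀ w hm']

lemma prod_range_one_sub_e_refine (z a : ℂ) {c : ℂ} (hc : c ≠ 0) {m : ℕ} (hm : 0 < m) :
    ∏ b ∈ range m, (1 - e ((z - a - c * b) / (c * m))) = 1 - e ((z - a) / c) := by
  rw [← prod_range_one_sub_e _ hm]
  refine prod_congr rfl fun b _ => ?_
  congr 2
  field_simp

lemma one_sub_e_ne_zero (c : ℚ) {N : ℚ} (hN : N ≠ 0) (z : Dom) :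
    1 - e ((z.1 - c) / N) ≠ 0 := by
  intro h
  obtain ⟨k, hk⟩ := e_eq_one_iff.mp (sub_eq_zero.mp h).symm
  rw [div_eq_iff (by exact_mod_cast hN)] at hk
  exact z.2 (c + N * k) (by push_cast; linear_combination -hk)

noncomputable def oneSubEUnit (c : ℚ) {N : ℚ} (hN : N ≠ 0) : (Dom → ℂ)ˣ :=
  (Pi.isUnit_iff.mpr fun z => (one_sub_e_ne_zero c hN z).isUnit).unit

lemma oneSubEUnit_apply (c : ℚ) {N : ℚ} (hN : N ≠ 0) (z : Dom) :
    (oneSubEUnit c hN : Dom → ℂ) z = 1 - e ((z.1 - c) / N) := rfl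

section DvdLimit

variable {G H : Type*} [AddCommGroup G] [AddCommGroup H] (φ : ℕ+ → G →+ H)

def HasDvdLimit (g : G) (h : H) : Prop :=
  ∃ n₀ : ℕ+, ∀ n, n₀ ∣ n → φ n g = h

variable {φ}

lemma HasDvdLimit.unique {g : G} {h h' : H} (hh : HasDvdLimit φ g h)
    (hh' : HasDvdLimit φ g h') : h = h' := by
  obtain ⟨n₀, hn₀⟩ := hh
  obtain ⟨n₁, hn₁⟩ := hh'
  rw [← hn₀ (n₀ * n₁) (dvd_mul_right _ _), hn₁ _ (dvd_mul_left _ _)]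

lemma HasDvdLimit.add {g g' : G} {h h' : H} (hh : HasDvdLimit φ g h)
    (hh' : HasDvdLimit φ g' h') : HasDvdLimit φ (g + g') (h + h') := by
  obtain ⟨n₀, hn₀⟩ := hh
  obtain ⟨n₁, hn₁⟩ := hh'
  exact ⟨n₀ * n₁, fun n hn => by
    rw [map_add, hn₀ n ((dvd_mul_right _ _).trans hn), hn₁ n ((dvd_mul_left _ _).trans hn)]⟩

lemma HasDvdLimit.neg {g : G} {h : H} (hh : HasDvdLimit φ g h) : HasDvdLimit φ (-g) (-h) := by
  obtain ⟨n₀, hn₀⟩ := hh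
  exact ⟨n₀, fun n hn => by rw [map_neg, hn₀ n hn]⟩

lemma hasDvdLimit_zero : HasDvdLimit φ 0 0 := ⟨1, fun n _ => map_zero (φ n)⟩

variable (φ)

def dvdConvergent : AddSubgroup G where
  carrier := {g | ∃ h, HasDvdLimit φ g h}
  add_mem' := fun ⟨h, hh⟩ ⟨h', hh'⟩ => ⟨h + h', hh.add hh'⟩
  zero_mem' := ⟨0, hasDvdLimit_zero⟩
  neg_mem' := fun ⟨h, hh⟩ => ⟨-h, hh.neg⟩

noncomputable def dvdLimit : dvdConvergent φ →+ H :=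
  AddMonoidHom.mk' (fun g => g.2.choose) fun g g' =>
    (g + g').2.choose_spec.unique (g.2.choose_spec.add g'.2.choose_spec)

lemma hasDvdLimit_dvdLimit (g : dvdConvergent φ) : HasDvdLimit φ g (dvdLimit φ g) :=
  g.2.choose_spec

end DvdLimit

open Classical in
lemma filter_range_mul_eq_image {A D m : ℕ} (hAD : A < D) :
    (range (D * m)).filter (fun j : ℕ => ∃ k : ℤ, (j : ℤ) = A + D * k) =
      (range m).image (fun b => A + D * b) := by
  ext j
  simp only [mem_filter, mem_range, mem_image]
  constructor
  · rintro ⟨hj, k, hk⟩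
    have hk0 : 0 ≤ k := by nlinarith
    have hkm : k < m := by
      have : (j : ℤ) < D * m := by exact_mod_cast hj
      nlinarith
    lift k to ℕ using hk0
    exact ⟨k, by exact_mod_cast hkm, by exact_mod_cast hk.symm⟩
  · rintro ⟨b, hb, rfl⟩
    exact ⟨by nlinarith, b, by push_cast; ring⟩

noncomputable def gridProd (n : ℕ+) : (ℚ → ℤ) →+ Additive (Dom → ℂ)ˣ :=
  AddMonoidHom.mk'
    (fun f => .ofMul
      (∏ j ∈ range (n * n), oneSubEUnit (j / n) (N := n) (by positivity) ^ f (j / n)))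
    fun f g => by simp only [Pi.add_apply, zpow_add, prod_mul_distrib, ofMul_mul]

lemma exists_div_eq_add_mul_iff {a d : ℚ} {n : ℕ+} {A D : ℕ} (hA : (A : ℚ) = n * a)
    (hD : (D : ℚ) = n * d) (j : ℕ) :
    (∃ k : ℤ, (j / n : ℚ) = a + d * k) ↔ ∃ k : ℤ, (j : ℤ) = A + D * k := by
  refine exists_congr fun k => ?_
  have : ((A + D * k : ℤ) : ℚ) = (a + d * k) * n := by push_cast; rw [hA, hD]; ring
  rw [div_eq_iff (by positivity), ← this]
  norm_cast

lemma gridProd_ind {a d : ℚ} (ha : 0 ≤ a) (had : a < d) {n : ℕ+} {m A D : ℕ}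
    (hm : (m : ℚ) = n * d⁻¹) (hA : (A : ℚ) = n * a) (hD : (D : ℚ) = n * d) :
    gridProd n (ind a d) = .ofMul (oneSubEUnit a (ha.trans_lt had).ne') := by
  classical
  have hd : 0 < d := ha.trans_lt had
  have hn : (0 : ℚ) < n := by positivity
  have hAD : A < D := by exact_mod_cast (hA ▸ hD ▸ mul_lt_mul_of_pos_left had hn)
  have hnd : (n : ℚ) = d * m := by rw [hm]; field_simp
  have hnn : (n : ℕ) * n = D * m := by
    have : (n : ℚ) * n = D * m := by rw [hD, hnd]; ring
    exact_mod_cast this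
  have hgrid (b : ℕ) : ((A + D * b : ℕ) : ℚ) / n = a + d * b := by
    rw [div_eq_iff hn.ne']; push_cast; rw [hA, hD]; ring
  calc gridProd n (ind a d)
      = .ofMul (∏ j ∈ (range (n * n)).filter (fun j : ℕ => ∃ k : ℤ, (j : ℤ) = A + D * k),
            oneSubEUnit (j / n) (N := n) hn.ne') := by
        simp only [gridProd, AddMonoidHom.mk'_apply, ind, exists_div_eq_add_mul_iff hA hD,
          prod_filter]
        congr 1
        refine prod_congr rfl fun j _ => ?_
        split_ifs <;> simp
    _ = .ofMul (∏ b ∈ range m, oneSubEUnit ((A + D * b : ℕ) / n) (N := n) hn.ne') := by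
        rw [hnn, filter_range_mul_eq_image hAD,
          prod_image fun b _ b' _ h => Nat.eq_of_mul_eq_mul_left (by omega) (Nat.add_left_cancel h)]
    _ = .ofMul (oneSubEUnit a hd.ne') := by
        congr 1
        ext z
        have hm0 : 0 < m := by exact_mod_cast (hm ▸ (by positivity : (0 : ℚ) < n * d⁻¹))
        rw [Units.coe_prod, prod_apply, oneSubEUnit_apply,
          ← prod_range_one_sub_e_refine z.1 a (by exact_mod_cast hd.ne') hm0]
        refine prod_congr rfl fun b _ => ?_
        rw [oneSubEUnit_apply, hgrid, hnd]
        push_cast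
        ring_nf

lemma Rat.exists_natCast_eq_mul_of_den_dvd {q : ℚ} (hq : 0 ≤ q) {k : ℕ} (hk : q.den ∣ k) :
    ∃ A : ℕ, (A : ℚ) = k * q := by
  obtain ⟨t, rfl⟩ := hk
  lift q.num to ℕ using Rat.num_nonneg.mpr hq with N hN
  refine ⟨N * t, ?_⟩
  have hN' : (N : ℚ) = q.num := by exact_mod_cast hN
  push_cast
  rw [hN', ← Rat.mul_den_eq_num]
  ring

lemma hasDvdLimit_gridProd_ind {a d : ℚ} (ha : 0 ≤ a) (had : a < d) :
    HasDvdLimit gridProd (ind a d) (.ofMul (oneSubEUnit a (ha.trans_lt had).ne')) := by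
  have hd : 0 < d := ha.trans_lt had
  refine ⟨⟨d⁻¹.den * a.den * d.den, by positivity⟩, fun n hn => ?_⟩
  obtain ⟨k, hk⟩ := PNat.dvd_iff.mp hn
  obtain ⟨m, hm⟩ := Rat.exists_natCast_eq_mul_of_den_dvd (inv_nonneg.mpr hd.le)
    (k := n) ⟨a.den * d.den * k, by rw [hk]; simp only [PNat.mk_coe]; ring⟩
  obtain ⟨A, hA⟩ := Rat.exists_natCast_eq_mul_of_den_dvd ha
    (k := n) ⟨d⁻¹.den * d.den * k, by rw [hk]; simp only [PNat.mk_coe]; ring⟩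
  obtain ⟨D, hD⟩ := Rat.exists_natCast_eq_mul_of_den_dvd hd.le
    (k := n) ⟨d⁻¹.den * a.den * k, by rw [hk]; simp only [PNat.mk_coe]; ring⟩
  exact gridProd_ind ha had hm hA hD

lemma SQ_le_dvdConvergent_gridProd : SQ ≤ dvdConvergent gridProd :=
  (AddSubgroup.closure_le _).mpr fun _ ⟨_, _, ha, had, hf⟩ =>
    hf ▸ ⟨_, hasDvdLimit_gridProd_ind ha had⟩

noncomputable def kubotaLeopoldt : SQ →+ Additive (Dom → ℂ)ˣ :=
  (dvdLimit gridProd).comp (AddSubgroup.inclusion SQ_le_dvdConvergent_gridProd)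

lemma kubotaLeopoldt_ind {a d : ℚ} (ha : 0 ≤ a) (had : a < d) (hmem : ind a d ∈ SQ) :
    kubotaLeopoldt ⟨ind a d, hmem⟩ = .ofMul (oneSubEUnit a (ha.trans_lt had).ne') :=
  (hasDvdLimit_dvdLimit gridProd _).unique (hasDvdLimit_gridProd_ind ha had)

/-- The multiplicative Kubota–Leopoldt distribution `η` is a well-defined group
homomorphism from `S(ℚ)` to the multiplicative group of nowhere-zero functions,
sending `χ_{a+dℤ}` (with `0 ≤ a < d`) to `z ↦ 1 - e^{2πi(z-a)/d}`; in particular it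
respects the refinement relation `χ_{a+dℤ} = Σ_{b=0}^{m-1} χ_{a+db+dmℤ}`, i.e.
`∏_{b=0}^{m-1} (1 - e((z-a-db)/(dm))) = 1 - e((z-a)/d)`. -/
theorem kubota_leopoldt_well_defined :
    (∃ η : SQ →+ Additive (Dom → ℂ)ˣ,
      ∀ (a d : ℚ), 0 ≤ a → a < d → ∀ hmem : ind a d ∈ SQ, ∀ z : Dom,
        ((Additive.toMul (η ⟨ind a d, hmem⟩) : (Dom → ℂ)ˣ) : Dom → ℂ) z
          = 1 - e ((z.1 - (a : ℂ)) / (d : ℂ))) ∧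
    (∀ (a d : ℚ) (m : ℕ), 0 ≤ a → a < d → 1 ≤ m → ∀ z : ℂ,
      ∏ b ∈ Finset.range m,
          (1 - e ((z - (a : ℂ) - (d : ℂ) * (b : ℂ)) / ((d : ℂ) * (m : ℂ))))
        = 1 - e ((z - (a : ℂ)) / (d : ℂ))) := by
  refine ⟨⟨kubotaLeopoldt, fun a d ha had hmem z => ?_⟩, fun a d m ha had hm z => ?_⟩
  · rw [kubotaLeopoldt_ind ha had hmem]
    rfl
  · exact prod_range_one_sub_e_refine z a (by exact_mod_cast (ha.trans_lt had).ne') hm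
end

section
/- Let ρ ∈ GL_n(ℝ) be the cyclic shift permutation matrix (ρ_{1,n} = 1, ρ_{i+1,i} = 1, all other entries 0). In the real closed-field setting F = ℝ((ε₁))···((ε_n)) with lexicographic order on monomials, the Shintani polyhedral cone function satisfies σ_n^{Sh}(1, ρ, ..., ρ^{n-1}) = χ_{(ℝ^+)^n}, the characteristic function of the open positive orthant. -/
/-!
The columns of `M` are the cyclic shifts of `b(ε_j)`, so `M` has ones on the diagonal and its
off-diagonal entries in column `j` are positive powers of `ε_j`, all bounded by the
infinitesimal `ε₁`. In the Leibniz expansion every non-identity permutation picks up such an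
entry, so `det M` is `1` up to an infinitesimal, and by Cramer's rule the coefficient
`λ_j = det(M with column j replaced by w) / det M` is `w_j` up to an infinitesimal. Hence all
`λ_j > 0` when `w` lies in the open orthant; conversely, a positive combination of the
positive columns of `M` is a positive vector.
-/

open Finset Equiv

theorem Equiv.Perm.exists_ne_apply_ne {ι : Type*} [Fintype ι] [DecidableEq ι]
    {σ : Perm ι} (hσ : σ ≠ 1) (k : ι) : ∃ j, j ≠ k ∧ σ j ≠ j := by
  obtain ⟨j, hj, hjk⟩ := Finset.exists_mem_ne (Perm.two_le_card_support_of_ne_one hσ) k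
  exact ⟨j, hjk, Perm.mem_support.mp hj⟩

namespace Matrix

variable {R : Type*} [CommRing R] [LinearOrder R] [IsStrictOrderedRing R]
  {ι : Type*} [Fintype ι] [DecidableEq ι]

theorem abs_prod_perm_le (A : Matrix ι ι R) (c : ι → R) (δ : R) (k : ι)
    (hA : ∀ i j, |A i j| ≤ c j) (hoff : ∀ i j, i ≠ j → j ≠ k → |A i j| ≤ δ * c j)
    {σ : Perm ι} (hσ : σ ≠ 1) : |∏ j, A (σ j) j| ≤ δ * ∏ j, c j := by
  obtain ⟨j₀, hj₀k, hσj₀⟩ := Perm.exists_ne_apply_ne hσ k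
  calc |∏ j, A (σ j) j| = ∏ j, |A (σ j) j| := abs_prod _ _
    _ ≤ ∏ j, Function.update c j₀ (δ * c j₀) j := by
        refine prod_le_prod (fun _ _ ↦ abs_nonneg _) fun j _ ↦ ?_
        rcases eq_or_ne j j₀ with rfl | hj
        · simpa using hoff _ _ hσj₀ hj₀k
        · simpa [hj] using hA _ _
    _ = δ * ∏ j, c j := by
        rw [prod_update_of_mem (mem_univ _), mul_assoc,
          ← prod_eq_mul_prod_sdiff_singleton_of_mem (mem_univ _)]

theorem abs_det_sub_prod_diag_le (A : Matrix ι ι R) (c : ι → R) {δ : R} (hδ : 0 ≤ δ) (k : ι)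
    (hA : ∀ i j, |A i j| ≤ c j) (hoff : ∀ i j, i ≠ j → j ≠ k → |A i j| ≤ δ * c j) :
    |A.det - ∏ i, A i i| ≤ (Fintype.card ι).factorial * (δ * ∏ j, c j) := by
  have hbound : 0 ≤ δ * ∏ j, c j :=
    mul_nonneg hδ (prod_nonneg fun j _ ↦ (abs_nonneg _).trans (hA j j))
  rw [det_apply, ← add_sum_erase _ _ (mem_univ 1)]
  simp only [Perm.sign_one, one_smul, Perm.one_apply, add_sub_cancel_left]
  calc |∑ σ ∈ univ.erase 1, Perm.sign σ • ∏ j, A (σ j) j|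
      ≤ ∑ σ ∈ univ.erase 1, |∏ j, A (σ j) j| := by
        refine (abs_sum_le_sum_abs _ _).trans_eq (sum_congr rfl fun σ _ ↦ ?_)
        rcases Int.units_eq_one_or (Perm.sign σ) with h | h <;> simp [h]
    _ ≤ ∑ σ ∈ univ.erase 1, δ * ∏ j, c j :=
        sum_le_sum fun σ hσ ↦ abs_prod_perm_le A c δ k hA hoff (ne_of_mem_erase hσ)
    _ ≤ ∑ _σ : Perm ι, δ * ∏ j, c j :=
        sum_le_sum_of_subset_of_nonneg (erase_subset _ _) fun _ _ _ ↦ hbound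
    _ = (Fintype.card ι).factorial * (δ * ∏ j, c j) := by simp [Fintype.card_perm]

theorem det_updateCol_pos (A : Matrix ι ι R) (b : ι → R) {δ : R} (hδ : 0 ≤ δ) (B : R) (j : ι)
    (hdiag : ∀ i, A i i = 1) (hA : ∀ i l, |A i l| ≤ 1) (hoff : ∀ i l, i ≠ l → |A i l| ≤ δ)
    (hb : ∀ i, |b i| ≤ B) (hsmall : (Fintype.card ι).factorial * (δ * B) < b j) :
    0 < (A.updateCol j b).det := by
  have hdiag' : (fun i ↦ A.updateCol j b i i) = Function.update (1 : ι → R) j (b j) := by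
    ext i
    rcases eq_or_ne i j with rfl | hi <;> simp [*]
  have h := abs_det_sub_prod_diag_le (A.updateCol j b) (Function.update (1 : ι → R) j B) hδ j
    (fun i l ↦ by rcases eq_or_ne l j with rfl | hl <;> simp [*])
    (fun i l hil hl ↦ by simpa [updateCol_apply, hl] using hoff i l hil)
  simp only [hdiag', prod_update_of_mem (mem_univ _), Pi.one_apply, prod_const_one,
    mul_one] at h
  linarith [(abs_le.mp h).1]

theorem det_pos_of_offDiag_le [Nonempty ι] (A : Matrix ι ι R) {δ : R} (hδ : 0 ≤ δ)
    (hdiag : ∀ i, A i i = 1) (hA : ∀ i l, |A i l| ≤ 1) (hoff : ∀ i l, i ≠ l → |A i l| ≤ δ)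
    (hsmall : (Fintype.card ι).factorial * δ < 1) : 0 < A.det := by
  obtain ⟨k⟩ := ‹Nonempty ι›
  simpa [updateCol_eq_self] using
    det_updateCol_pos A (fun i ↦ A i k) hδ 1 k hdiag hA hoff (hA · k) (by simpa [hdiag])

theorem exists_pos_mulVec_eq_of_det_updateCol_pos {K : Type*} [Field K] [LinearOrder K]
    [IsStrictOrderedRing K] (A : Matrix ι ι K) (b : ι → K) (hA : 0 < A.det)
    (hcol : ∀ j, 0 < (A.updateCol j b).det) : ∃ x, (∀ j, 0 < x j) ∧ A *ᵥ x = b := by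
  refine ⟨A.det⁻¹ • cramer A b, fun j ↦ ?_, ?_⟩
  · simpa [cramer_apply] using mul_pos (inv_pos.mpr hA) (hcol j)
  · rw [mulVec_smul, mulVec_cramer, smul_smul, inv_mul_cancel₀ hA.ne', one_smul]

end Matrix

theorem pow_cyclic_exponent_le {M : Type*} [MonoidWithZero M] [PartialOrder M]
    [ZeroLEOneClass M] [PosMulMono M] {x : M} (hx₀ : 0 ≤ x) (hx₁ : x ≤ 1) {n : ℕ}
    {r j : Fin n} (h : r ≠ j) : x ^ ((n + r - j) % n) ≤ x := by
  refine pow_le_of_le_one hx₀ hx₁ fun h0 ↦ h (Fin.ext ?_)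
  rcases le_or_gt (j : ℕ) r with hjr | hrj
  · rw [show n + r - j = (r - j) + n by omega, Nat.add_mod_right,
      Nat.mod_eq_of_lt (by omega)] at h0
    omega
  · rw [Nat.mod_eq_of_lt (by omega)] at h0
    omega

theorem mul_map_lt_map {F : Type*} [Field F] [LinearOrder F] [IsStrictOrderedRing F]
    {φ : ℝ →+* F} (hφ : StrictMono φ) {x : F} (hx : ∀ r : ℝ, 0 < r → x < φ r)
    {r s : ℝ} (hr : 0 < r) (hs : 0 < s) : x * φ s < φ r := by
  have hφs : 0 < φ s := by simpa using hφ hs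
  calc x * φ s < φ (r / s) * φ s := mul_lt_mul_of_pos_right (hx _ (div_pos hr hs)) hφs
    _ = φ r := by rw [← map_mul, div_mul_cancel₀ _ hs.ne']

open Classical in
theorem shintani_cone_at_shift_general
    (n : ℕ) (hn : 1 ≤ n)
    (F : Type) [Field F] [LinearOrder F] [IsStrictOrderedRing F] (φ : ℝ →+* F) (hφ : StrictMono φ)
    (ε : Fin n → F)
    (hpos : ∀ i, 0 < ε i)
    (hsmall : ∀ r : ℝ, 0 < r → ε ⟨0, hn⟩ < φ r)
    (hchain : ∀ i j : Fin n, i < j → ∀ (r : ℝ) (k : ℕ), 0 < r → ε j < φ r * (ε i) ^ k)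
    (M : Matrix (Fin n) (Fin n) F)
    (hM : ∀ r j : Fin n, M r j = (ε j) ^ ((n + (r : ℕ) - (j : ℕ)) % n))
    (w : Fin n → ℝ) :
    (if ∃ lam : Fin n → F, (∀ j, 0 < lam j) ∧ (∀ r, φ (w r) = ∑ j, lam j * M r j)
      then (if 0 < M.det then (1 : ℤ) else if M.det < 0 then -1 else 0)
      else 0)
    = (if ∀ i, 0 < w i then 1 else 0) := by
  have : Nonempty (Fin n) := ⟨⟨0, hn⟩⟩
  set ε₀ := ε ⟨0, hn⟩
  have hε_le : ∀ j, ε j ≤ ε₀ := fun j ↦ by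
    rcases (Nat.zero_le j).eq_or_lt with h | h
    · exact (congrArg ε (Fin.ext h.symm)).le
    · simpa using (hchain _ j h 1 1 one_pos).le
  have hε_le_one : ∀ j, ε j ≤ 1 := fun j ↦ (hε_le j).trans (by simpa using (hsmall 1 one_pos).le)
  have hMpos : ∀ r j, 0 < M r j := fun r j ↦ hM r j ▸ pow_pos (hpos j) _
  have hMabs : ∀ r j, |M r j| ≤ 1 := fun r j ↦ by
    rw [abs_of_pos (hMpos r j), hM]
    exact pow_le_one₀ (hpos j).le (hε_le_one j)
  have hMoff : ∀ r j, r ≠ j → |M r j| ≤ ε₀ := fun r j h ↦ by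
    rw [abs_of_pos (hMpos r j), hM]
    exact (pow_cyclic_exponent_le (hpos j).le (hε_le_one j) h).trans (hε_le j)
  have hMdiag : ∀ r, M r r = 1 := fun r ↦ by simp [hM]
  have hfact : ((Fintype.card (Fin n)).factorial : F) = φ (n.factorial : ℝ) := by simp
  have hdet : 0 < M.det := Matrix.det_pos_of_offDiag_le M (hpos _).le hMdiag hMabs hMoff
    (by simpa [hfact, mul_comm] using
      mul_map_lt_map hφ hsmall one_pos (s := n.factorial) (by positivity))
  by_cases hw : ∀ i, 0 < w i
  · have hc : 0 < ∑ i, w i := sum_pos (fun i _ ↦ hw i) univ_nonempty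
    have hwc : ∀ i, |φ (w i)| ≤ φ (∑ i, w i) := fun i ↦ by
      rw [abs_of_pos (by simpa using hφ (hw i))]
      exact hφ.monotone (single_le_sum (fun j _ ↦ (hw j).le) (mem_univ i))
    obtain ⟨lam, hlam, hMlam⟩ := M.exists_pos_mulVec_eq_of_det_updateCol_pos (φ ∘ w) hdet
      fun j ↦ M.det_updateCol_pos _ (hpos _).le _ j hMdiag hMabs hMoff hwc <| by
        simpa [hfact, mul_comm, mul_left_comm] using
          mul_map_lt_map hφ hsmall (hw j) (s := n.factorial * ∑ i, w i) (by positivity)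
    refine (if_pos ⟨lam, hlam, fun r ↦ ?_⟩).trans (by simp [hdet, hw])
    rw [← Function.comp_apply (f := φ), ← hMlam]
    simp only [Matrix.mulVec, dotProduct, mul_comm]
  · rw [if_neg hw, if_neg]
    rintro ⟨lam, hlam, hsum⟩
    refine hw fun i ↦ hφ.lt_iff_lt.mp ?_
    simpa [hsum] using sum_pos (fun j _ ↦ mul_pos (hlam j) (hMpos i j)) univ_nonempty

open Classical in
/-- Proposition 3.4: in the ordered-field setting `F = ℝ((ε₁))⋯((ε_n))` (formalized as any
linearly ordered field `F` with an order embedding `φ : ℝ →+* F` and positive elements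
`ε₁, …, ε_n` such that `ε₁` is infinitesimal and each `ε_j` (`j > i`) is infinitesimally
smaller than every power of `ε_i`), the Shintani polyhedral cone function evaluated at
`(1, ρ, …, ρ^{n-1})` for the cyclic shift `ρ` is the characteristic function of the open
positive orthant: here `M` is the matrix with `j`-th column `ρ^{j-1}·b(ε_j)`,
`b(ε) = (1, ε, …, ε^{n-1})ᵀ`, i.e. `M_{r,j} = ε_j^{(r-j) mod n}`, and for `w ∈ ℝⁿ \ {0}`
the cone value `c(columns of M)(w)` — `sign det M` if `w = Σ λ_j v_j` with all `λ_j > 0`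
in `F`, and `0` otherwise — equals `1` if all `w_i > 0` and `0` otherwise. -/
theorem shintani_cone_at_shift
    (n : ℕ) (hn : 1 ≤ n)
    (F : Type) [Field F] [LinearOrder F] [IsStrictOrderedRing F] (φ : ℝ →+* F) (hφ : StrictMono φ)
    (ε : Fin n → F)
    (hpos : ∀ i, 0 < ε i)
    (hsmall : ∀ r : ℝ, 0 < r → ε ⟨0, hn⟩ < φ r)
    (hchain : ∀ i j : Fin n, i < j → ∀ (r : ℝ) (k : ℕ), 0 < r → ε j < φ r * (ε i) ^ k)
    (M : Matrix (Fin n) (Fin n) F)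
    (hM : ∀ r j : Fin n, M r j = (ε j) ^ ((n + (r : ℕ) - (j : ℕ)) % n))
    (w : Fin n → ℝ) (hw : w ≠ 0) :
    (if ∃ lam : Fin n → F, (∀ j, 0 < lam j) ∧ (∀ r, φ (w r) = ∑ j, lam j * M r j)
      then (if 0 < M.det then (1 : ℤ) else if M.det < 0 then -1 else 0)
      else 0)
    = (if ∀ i, 0 < w i then 1 else 0) :=
  shintani_cone_at_shift_general n hn F φ hφ ε hpos hsmall hchain M hM w
end

section
/- Let M be the n×n matrix over F = ℝ((ε₁))···((ε_n)) with entries M_{i+j,j} = ε_j^i (index i+j taken modulo n), i.e. the j-th column is ρ^{j-1}·b(ε_j) for the cyclic shift ρ and b(ε)=(1,ε,...,ε^{n-1})^T. Then det M has sign +1 (its leading monomial has coefficient 1). -/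
/-!
In the Leibniz expansion of `det M` the identity permutation contributes `∏ ε_j ^ 0 = 1`.
Every other permutation moves some `j`, so its term contains a factor `ε_j ^ k` with `k ≥ 1`;
since all entries lie in `[0, 1]` and every `ε_j` is infinitesimal, each of these `n! - 1` terms
has absolute value below `1 / n!`, and they cannot cancel the leading `1`.
-/

open Finset Matrix

theorem Nat.add_sub_mod_eq_zero_iff {n r j : ℕ} (hr : r < n) (hj : j < n) :
    (n + r - j) % n = 0 ↔ r = j := by
  rcases lt_or_ge r j with h | h
  · rw [Nat.mod_eq_of_lt (by omega)]; omega
  · rw [Nat.add_sub_assoc h, Nat.add_mod_left, Nat.mod_eq_of_lt (by omega)]; omega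

theorem abs_units_int_smul {R : Type*} [Ring R] [LinearOrder R] [IsOrderedRing R]
    (u : ℤˣ) (x : R) : |u • x| = |x| := by
  rcases Int.units_eq_one_or u with rfl | rfl <;> simp

section

variable {ι R : Type*} [Fintype ι]

theorem Matrix.prod_perm_le_apply [CommSemiring R] [PartialOrder R] [IsOrderedRing R]
    {M : Matrix ι ι R} (h0 : ∀ i j, 0 ≤ M i j) (h1 : ∀ i j, M i j ≤ 1)
    (σ : Equiv.Perm ι) (j : ι) : ∏ i, M (σ i) i ≤ M (σ j) j := by
  simpa using prod_le_prod_of_subset_of_le_one (subset_univ {j}) (fun i _ => h0 (σ i) i)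
    (fun i _ _ => h1 (σ i) i)

theorem Matrix.det_pos_of_offDiag_lt_inv_factorial [DecidableEq ι] [Field R] [LinearOrder R]
    [IsStrictOrderedRing R] (M : Matrix ι ι R) (h0 : ∀ i j, 0 ≤ M i j)
    (hdiag : ∀ i, M i i = 1)
    (hoff : ∀ i j, i ≠ j → M i j < ((Fintype.card ι).factorial : R)⁻¹) :
    0 < M.det := by
  set N : R := ↑(Fintype.card ι).factorial
  have hN : 1 ≤ N := Nat.one_le_cast.mpr (Nat.factorial_pos _)
  have h1 : ∀ i j, M i j ≤ 1 := fun i j => by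
    rcases eq_or_ne i j with rfl | hij
    · exact (hdiag i).le
    · exact (hoff i j hij).le.trans (inv_le_one_of_one_le₀ hN)
  set S := univ.erase (1 : Equiv.Perm ι)
  have hterm : ∀ σ ∈ S, |σ.sign • ∏ i, M (σ i) i| ≤ N⁻¹ := by
    intro σ hσ
    obtain ⟨j, hj⟩ : ∃ j, σ j ≠ j :=
      not_forall.mp fun h => (mem_erase.mp hσ).1 (Equiv.ext h)
    rw [abs_units_int_smul, abs_of_nonneg (prod_nonneg fun i _ => h0 (σ i) i)]
    exact (prod_perm_le_apply h0 h1 σ j).trans (hoff _ _ hj).le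
  have hcard : (S.card : R) < N := by
    rw [card_erase_of_mem (mem_univ _), Finset.card_univ, Fintype.card_perm]
    exact Nat.cast_lt.mpr (Nat.sub_lt (Nat.factorial_pos _) one_pos)
  have hrest : |∑ σ ∈ S, σ.sign • ∏ i, M (σ i) i| < 1 := calc
    _ ≤ ∑ σ ∈ S, |σ.sign • ∏ i, M (σ i) i| := abs_sum_le_sum_abs _ _
    _ ≤ S.card • N⁻¹ := sum_le_card_nsmul _ _ _ hterm
    _ < N * N⁻¹ := by rw [nsmul_eq_mul]; gcongr
    _ = 1 := mul_inv_cancel₀ (by positivity)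
  rw [det_apply, ← add_sum_erase _ _ (mem_univ 1)]
  simp only [Equiv.Perm.sign_one, one_smul, Equiv.Perm.one_apply, hdiag, prod_const_one]
  linarith [(abs_lt.mp hrest).1]

end

theorem shintani_det_sign_general
    (n : ℕ) (hn : 1 ≤ n)
    (F : Type) [Field F] [LinearOrder F] [IsStrictOrderedRing F] (φ : ℝ →+* F)
    (ε : Fin n → F)
    (hpos : ∀ i, 0 < ε i)
    (hsmall : ∀ r : ℝ, 0 < r → ε ⟨0, hn⟩ < φ r)
    (hchain : ∀ i j : Fin n, i < j → ∀ (r : ℝ) (k : ℕ), 0 < r → ε j < φ r * (ε i) ^ k)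
    (M : Matrix (Fin n) (Fin n) F)
    (hM : ∀ r j : Fin n, M r j = (ε j) ^ ((n + (r : ℕ) - (j : ℕ)) % n)) :
    0 < M.det := by
  have hinfinitesimal : ∀ j r, 0 < r → ε j < φ r := fun j r hr => by
    rcases eq_or_ne j ⟨0, hn⟩ with rfl | hj
    · exact hsmall r hr
    · have h0j : (⟨0, hn⟩ : Fin n) < j :=
        (Fin.mk_le_of_le_val (Nat.zero_le _)).lt_of_ne hj.symm
      simpa using hchain ⟨0, hn⟩ j h0j r 0 hr
  have hε : ∀ j, ε j < (n.factorial : F)⁻¹ := fun j => by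
    simpa using hinfinitesimal j (n.factorial : ℝ)⁻¹ (by positivity)
  refine M.det_pos_of_offDiag_lt_inv_factorial (fun r j => hM r j ▸ pow_nonneg (hpos j).le _)
    (fun r => by simp [hM]) fun r j hrj => ?_
  have hexp : (n + (r : ℕ) - (j : ℕ)) % n ≠ 0 :=
    (Nat.add_sub_mod_eq_zero_iff r.isLt j.isLt).not.mpr (Fin.val_ne_of_ne hrj)
  have hε1 : ε j ≤ 1 :=
    (hε j).le.trans (inv_le_one_of_one_le₀ (Nat.one_le_cast.mpr n.factorial_pos))
  rw [hM, Fintype.card_fin]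
  exact (pow_le_of_le_one (hpos j).le hε1 hexp).trans_lt (hε j)

/-- The determinant sign computation in the proof of Proposition 3.4: in the ordered-field
setting `F = ℝ((ε₁))⋯((ε_n))` (formalized as any linearly ordered field `F` with an order
embedding `φ : ℝ →+* F` and positive elements `ε₁, …, ε_n` such that `ε₁` is infinitesimal
and each `ε_j` (`j > i`) is infinitesimally smaller than every power of `ε_i`), the matrix
`M` with entries `M_{r,j} = ε_j^{(r-j) mod n}` (i.e. `j`-th column `ρ^{j-1}·b(ε_j)` for the
cyclic shift `ρ` and `b(ε) = (1, ε, …, ε^{n-1})ᵀ`) has positive determinant: its leading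
monomial has coefficient `1`. -/
theorem shintani_det_sign
    (n : ℕ) (hn : 1 ≤ n)
    (F : Type) [Field F] [LinearOrder F] [IsStrictOrderedRing F] (φ : ℝ →+* F) (hφ : StrictMono φ)
    (ε : Fin n → F)
    (hpos : ∀ i, 0 < ε i)
    (hsmall : ∀ r : ℝ, 0 < r → ε ⟨0, hn⟩ < φ r)
    (hchain : ∀ i j : Fin n, i < j → ∀ (r : ℝ) (k : ℕ), 0 < r → ε j < φ r * (ε i) ^ k)
    (M : Matrix (Fin n) (Fin n) F)
    (hM : ∀ r j : Fin n, M r j = (ε j) ^ ((n + (r : ℕ) - (j : ℕ)) % n)) :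
    0 < M.det :=
  shintani_det_sign_general n hn F φ ε hpos hsmall hchain M hM
end

section
/- Define subsets of ℝ^n: R₁ = S₊(1) ∪ ⋃_{i=2}^n S₋(1,...,i) and for 2 ≤ k ≤ n, R_k = S₊(k) ∪ ⋃_{i=1}^{k-1} S₋(k,1,...,i) ∪ ⋃_{i=k+1}^n S₊(1,...,i), where S_±(i₁,...,i_m) = {w ∈ ℝ^n : w_{i₁} = ... = w_{i_{m-1}} = 0, ±w_{i_m} > 0}. Then R₁ ∩ ... ∩ R_n = (ℝ⁺)^n, the open positive orthant. -/
/-- The sets `R_k ⊆ ℝⁿ` from the proof of Proposition 3.4 (0-indexed: `R k` is `R_{k+1}` of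
the paper).  With `S_±(i₁,…,i_m) = {w : w_{i₁} = ⋯ = w_{i_{m-1}} = 0, ±w_{i_m} > 0}`:
`R₁ = S₊(1) ∪ ⋃_{i=2}^n S₋(1,…,i)` and, for `k ≥ 2`,
`R_k = S₊(k) ∪ ⋃_{i=1}^{k-1} S₋(k,1,…,i) ∪ ⋃_{i=k+1}^n S₊(1,…,i)`. -/
def Rset (n : ℕ) (k : Fin n) : Set (Fin n → ℝ) :=
  {w | 0 < w k} ∪
  (⋃ (i : Fin n) (_ : i < k),
    {w | w k = 0 ∧ (∀ j, j < i → w j = 0) ∧ w i < 0}) ∪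
  (⋃ (i : Fin n) (_ : k < i),
    {w | (∀ j, j < i → w j = 0) ∧ (if (k : ℕ) = 0 then w i < 0 else 0 < w i)})

/-- `R₁ ∩ ⋯ ∩ R_n = (ℝ⁺)ⁿ`, the open positive orthant. -/
theorem inter_Rset_eq_orthant (n : ℕ) :
    (⋂ k : Fin n, Rset n k) = {w : Fin n → ℝ | ∀ i, 0 < w i} := by
  ext w
  simp only [Set.mem_iInter, Set.mem_setOf_eq]
  constructor
  · intro h
    -- Claim A: no index m with all earlier coords zero and w m < 0.
    have hA : ∀ m : Fin n, ¬ ((∀ j, j < m → w j = 0) ∧ w m < 0) := by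
      rintro m ⟨hz, hneg⟩
      have hm := h m
      rcases hm with (hm | hm) | hm
      · exact absurd hm (not_lt.2 hneg.le)
      · simp only [Set.mem_iUnion, Set.mem_setOf_eq] at hm
        obtain ⟨i, hi, h0, _, _⟩ := hm
        exact absurd h0 hneg.ne
      · simp only [Set.mem_iUnion, Set.mem_setOf_eq] at hm
        obtain ⟨i, hi, hz', _⟩ := hm
        exact absurd (hz' m hi) hneg.ne
    -- strong induction on the index
    have key : ∀ N : ℕ, ∀ i : Fin n, (i : ℕ) ≤ N → 0 < w i := by
      intro N
      induction N with
      | zero =>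
        intro i hi
        have h0 := h i
        rcases h0 with (h0 | h0) | h0
        · exact h0
        · simp only [Set.mem_iUnion, Set.mem_setOf_eq] at h0
          obtain ⟨j, hj, _, _, _⟩ := h0
          have := hj.trans_le (show i ≤ j from Fin.le_def.mpr (by omega))
          exact absurd this (lt_irrefl _)
        · simp only [Set.mem_iUnion, Set.mem_setOf_eq] at h0
          obtain ⟨j, hj, hz', hsign⟩ := h0
          have : (i : ℕ) = 0 := Nat.le_zero.mp hi
          rw [if_pos this] at hsign
          exact absurd ⟨hz', hsign⟩ (hA j)
      | succ N IH =>
        intro i hi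
        rcases Nat.lt_or_ge (i : ℕ) (N + 1) with hlt | hge
        · exact IH i (Nat.lt_succ_iff.mp hlt)
        have hiN : (i : ℕ) = N + 1 := le_antisymm hi hge
        have h0 := h i
        rcases h0 with (h0 | h0) | h0
        · exact h0
        · simp only [Set.mem_iUnion, Set.mem_setOf_eq] at h0
          obtain ⟨j, hj, _, _, hneg⟩ := h0
          have : 0 < w j := IH j (by omega)
          exact absurd this (not_lt.2 hneg.le)
        · simp only [Set.mem_iUnion, Set.mem_setOf_eq] at h0
          obtain ⟨j, hj, hz', _⟩ := h0
          have h0pos : (0 : ℕ) < n := i.pos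
          have hzero : w ⟨0, h0pos⟩ = 0 := hz' ⟨0, h0pos⟩ (lt_of_le_of_lt (by
            simp [Fin.le_def]) hj)
          have : 0 < w ⟨0, h0pos⟩ := IH ⟨0, h0pos⟩ (by simp)
          exact absurd hzero this.ne'
    exact fun i => key (i : ℕ) i le_rfl
  · intro h k
    left; left; exact h k
end
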